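/- arXiv:1906.00995 — 2 statements merged into one kernel-verified Lean document; each statement's English description precedes it below -/
import Mathlib

section
/- For a multiring A with −1 ∉ ΣA², the map a ↦ ā from A onto Q_red(A) := Q_{ΣA²}(A) is an isomorphism of multirings if and only if A satisfies all of the following: (a) a³ = a for all a; (b) a + ab² = {a} for all a, b; (c) a² + b² contains a unique element for all a, b. -/
/-! # Multirings (Marshall) -/

universe u v

/-- A multiring in the sense of Marshall: a commutative monoid under `mul` with a
multivalued addition `add : A → A → Set A`. -/
structure Multiring (A : Type u) where
  add : A → A → Set A
  mul : A → A → A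
  neg : A → A
  zero : A
  one : A
  add_nonempty : ∀ a b : A, (add a b).Nonempty
  add_comm' : ∀ a b : A, add a b = add b a
  add_assoc' : ∀ a b c : A, (⋃ x ∈ add b c, add a x) = ⋃ y ∈ add a b, add y c
  add_zero' : ∀ a : A, add a zero = {a}
  zero_mem_add_neg : ∀ a : A, zero ∈ add a (neg a)
  neg_unique : ∀ a b : A, zero ∈ add a b → b = neg a
  mem_add_reverse : ∀ a b c : A, c ∈ add a b → a ∈ add c (neg b)
  mul_comm' : ∀ a b : A, mul a b = mul b a
  mul_assoc' : ∀ a b c : A, mul (mul a b) c = mul a (mul b c)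
  mul_one' : ∀ a : A, mul a one = a
  mul_zero' : ∀ a : A, mul a zero = zero
  mul_mem_add : ∀ d a b c : A, c ∈ add a b → mul d c ∈ add (mul d a) (mul d b)

namespace Multiring

variable {A : Type u} {B : Type v}

/-- `M.SumSq x` : `x` belongs to some finite multivalued sum of squares of `A`. -/
inductive SumSq (M : Multiring A) : A → Prop
  | sq : ∀ a : A, SumSq M (M.mul a a)
  | step : ∀ a b c : A, SumSq M b → c ∈ M.add (M.mul a a) b → SumSq M c

/-- A real reduced multiring: `−1 ∉ ΣA²`, `a³ = a`, `a + ab² = {a}`, and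
`a² + b²` is a singleton. -/
def IsRealReduced (M : Multiring A) : Prop :=
  ¬ M.SumSq (M.neg M.one) ∧
  (∀ a : A, M.mul a (M.mul a a) = a) ∧
  (∀ a b : A, M.add a (M.mul a (M.mul b b)) = {a}) ∧
  (∀ a b : A, ∃! c : A, c ∈ M.add (M.mul a a) (M.mul b b))

/-- Quadratically tuned multiring: axioms QT0–QT5. -/
def IsQT (M : Multiring A) : Prop :=
  -- QT0
  (∀ a : A, M.mul a (M.mul a a) = a) ∧
  -- QT1
  (∀ a : A, M.one ∈ M.add M.one a) ∧
  -- QT2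
  (∀ a b c d e : A, M.mul a d = M.mul b d → M.mul a e = M.mul b e →
    c ∈ M.add (M.mul (M.mul c c) d) (M.mul (M.mul c c) e) → M.mul a c = M.mul b c) ∧
  -- QT3
  (∀ a b c d e : A,
    e ∈ M.add (M.mul (M.mul (M.mul c e) (M.mul c e)) a)
              (M.mul (M.mul (M.mul d e) (M.mul d e)) b) →
    e ∈ M.add (M.mul (M.mul e e) a) (M.mul (M.mul e e) b)) ∧
  -- QT4
  (∀ a b c : A, a ∈ M.add (M.mul (M.mul a a) b) (M.mul (M.mul a a) c) →
    M.mul a a ∈ M.add (M.mul (M.mul a b) (M.mul a b)) (M.mul (M.mul a c) (M.mul a c))) ∧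
  -- QT5
  (∀ a b e : A, e ∈ M.add a b ↔
    (e ∈ M.add (M.mul a (M.mul e e)) (M.mul b (M.mul e e)) ∧
     M.neg a ∈ M.add (M.mul b (M.mul a a)) (M.neg (M.mul e (M.mul a a))) ∧
     M.neg b ∈ M.add (M.mul a (M.mul b b)) (M.neg (M.mul e (M.mul b b)))))

/-- Morphism of multirings. -/
def IsHom (M : Multiring A) (N : Multiring B) (f : A → B) : Prop :=
  f M.zero = N.zero ∧ f M.one = N.one ∧
  (∀ a : A, f (M.neg a) = N.neg (f a)) ∧
  (∀ a b : A, f (M.mul a b) = N.mul (f a) (f b)) ∧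
  (∀ a b c : A, c ∈ M.add a b → f c ∈ N.add (f a) (f b))

/-- Isomorphism of multirings: a bijective morphism whose inverse is also a morphism. -/
def IsIso (M : Multiring A) (N : Multiring B) (f : A → B) : Prop :=
  IsHom M N f ∧ ∃ g : B → A, IsHom N M g ∧ (∀ a, g (f a) = a) ∧ (∀ b, f (g b) = b)

end Multiring

/-! ## The multifield `Q₂ = {−1,0,1}` (realized on `SignType`) -/

/-- Multivalued addition of `Q₂`: `a+0={a}`, `1+1={1}`, `(−1)+(−1)={−1}`,
`1+(−1)={−1,0,1}`. -/
def Q2add (a b : SignType) : Set SignType :=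
  if a = 0 then {b} else if b = 0 then {a} else if a = b then {a} else Set.univ

namespace Multiring

variable {A : Type u}

/-- A point of the real spectrum: a multiring morphism `σ : A → Q₂`. -/
def IsSperMap (M : Multiring A) (σ : A → SignType) : Prop :=
  σ M.zero = 0 ∧ σ M.one = 1 ∧
  (∀ a : A, σ (M.neg a) = -σ a) ∧
  (∀ a b : A, σ (M.mul a b) = σ a * σ b) ∧
  (∀ a b c : A, c ∈ M.add a b → σ c ∈ Q2add (σ a) (σ b))

/-- `Sper(A)`, the real spectrum of the multiring `A`. -/
def Sper (M : Multiring A) : Type u := {σ : A → SignType // M.IsSperMap σ}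

/-- A preordering of a multiring. -/
def IsPreordering (M : Multiring A) (T : Set A) : Prop :=
  (∀ a ∈ T, ∀ b ∈ T, M.add a b ⊆ T) ∧
  (∀ a ∈ T, ∀ b ∈ T, M.mul a b ∈ T) ∧
  (∀ a : A, M.mul a a ∈ T)

/-- `X_T = {σ ∈ Sper(A) : σ(t) ∈ {0,1} for all t ∈ T}`. -/
def XT (M : Multiring A) (T : Set A) : Type u :=
  {σ : A → SignType // M.IsSperMap σ ∧ ∀ t ∈ T, σ t = 0 ∨ σ t = 1}

/-- The evaluation map `a ↦ ā`, `ā(σ) = σ(a)`, into `Q₂^{X_T}`. -/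
def evalT (M : Multiring A) (T : Set A) (a : A) : XT M T → SignType :=
  fun σ => σ.1 a

/-- The carrier of `Q_T(A)`: the image of `A` in `Q₂^{X_T}`. -/
def QTcar (M : Multiring A) (T : Set A) : Set (XT M T → SignType) :=
  Set.range (evalT M T)

/-- The evaluation map `a ↦ ā` viewed as a map onto `Q_T(A)`. -/
def evalQ (M : Multiring A) (T : Set A) (a : A) : QTcar M T :=
  ⟨evalT M T a, a, rfl⟩

/-- Evaluation `a ↦ â` into `Q₂^{Sper(A)}`. -/
def hat (M : Multiring A) (a : A) : M.Sper → SignType := fun σ => σ.1 a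

end Multiring

/-! ## Abstract real spectra -/

/-- Representation: `D(a,b)` for a set `G` of functions `X → {−1,0,1}`. -/
def Dfun {X : Type u} (G : Set (X → SignType)) (a b : X → SignType) : Set (X → SignType) :=
  {c | c ∈ G ∧ ∀ x : X, 0 < a x * c x ∨ 0 < b x * c x ∨ c x = 0}

/-- Transversal representation `Dᵗ(a,b)`. -/
def Dtfun {X : Type u} (G : Set (X → SignType)) (a b : X → SignType) : Set (X → SignType) :=
  {c | c ∈ G ∧ ∀ x : X, 0 < a x * c x ∨ 0 < b x * c x ∨ (c x = 0 ∧ b x = -a x)}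

/-- An abstract real spectrum (space of signs) on a set `X`. -/
structure ARS (X : Type u) where
  G : Set (X → SignType)
  nonemptyX : Nonempty X
  one_mem : (fun _ => (1 : SignType)) ∈ G
  zero_mem : (fun _ => (0 : SignType)) ∈ G
  negOne_mem : (fun _ => (-1 : SignType)) ∈ G
  mul_mem : ∀ {a b : X → SignType}, a ∈ G → b ∈ G → (fun x => a x * b x) ∈ G
  separates : ∀ x y : X, x ≠ y → ∃ a ∈ G, a x ≠ a y
  ax2 : ∀ P : Set (X → SignType), P ⊆ G → (fun _ => (1 : SignType)) ∈ P →
    (∀ {a b : X → SignType}, a ∈ P → b ∈ P → (fun x => a x * b x) ∈ P) →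
    (∀ a ∈ G, a ∈ P ∨ (fun x => -(a x)) ∈ P) →
    (fun _ => (-1 : SignType)) ∉ P →
    (∀ {a b : X → SignType}, a ∈ P → b ∈ P → Dfun G a b ⊆ P) →
    (∀ {a b : X → SignType}, a ∈ G → b ∈ G →
      (fun x => a x * b x) ∈ P → (fun x => -(a x * b x)) ∈ P →
      (a ∈ P ∧ (fun x => -(a x)) ∈ P) ∨ (b ∈ P ∧ (fun x => -(b x)) ∈ P)) →
    ∃! x : X, P = {a | a ∈ G ∧ a x ≤ 0}
  ax3a : ∀ a b c p q : X → SignType, a ∈ G → b ∈ G → c ∈ G →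
    q ∈ Dfun G b c → p ∈ Dfun G a q → ∃ r ∈ Dfun G a b, p ∈ Dfun G r c
  ax3b : ∀ a b : X → SignType, a ∈ G → b ∈ G → (Dtfun G a b).Nonempty

/-! ## Ternary semigroups, real semigroups and pre-real semigroups -/

/-- The raw data of a ternary structure with a ternary relation `D`
(`D a b c` means `a ∈ D(b,c)`). -/
structure TernaryStruct (G : Type u) where
  mul : G → G → G
  one : G
  zero : G
  negOne : G
  D : G → G → G → Prop

namespace TernaryStruct

variable {G : Type u}

def neg (S : TernaryStruct G) (a : G) : G := S.mul S.negOne a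

/-- Transversal representation: `a ∈ Dᵗ(b,c) ⟺ a ∈ D(b,c) ∧ −b ∈ D(−a,c) ∧ −c ∈ D(b,−a)`. -/
def Dt (S : TernaryStruct G) (a b c : G) : Prop :=
  S.D a b c ∧ S.D (S.neg b) (S.neg a) c ∧ S.D (S.neg c) b (S.neg a)

end TernaryStruct

/-- Axioms of a ternary semigroup together with [RS0]-[RS6] and [RS8]. -/
structure PreRealSemigroupAux (G : Type u) extends TernaryStruct G where
  mul_comm' : ∀ a b : G, mul a b = mul b a
  mul_assoc' : ∀ a b c : G, mul (mul a b) c = mul a (mul b c)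
  mul_one' : ∀ a : G, mul a one = a
  cube : ∀ a : G, mul a (mul a a) = a
  negOne_ne_one : negOne ≠ one
  negOne_mul_negOne : mul negOne negOne = one
  mul_zero' : ∀ a : G, mul a zero = zero
  neg_fix : ∀ a : G, mul negOne a = a → a = zero
  rs0 : ∀ a b c : G, D c a b ↔ D c b a
  rs1 : ∀ a b : G, D a a b
  rs2 : ∀ a b c d : G, D a b c → D (mul a d) (mul b d) (mul c d)
  rs3 : ∀ a b c d e : G, toTernaryStruct.Dt a b c → toTernaryStruct.Dt c d e →
    ∃ x : G, toTernaryStruct.Dt x b d ∧ toTernaryStruct.Dt a x e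
  rs4 : ∀ a b c d e : G, D e (mul (mul c c) a) (mul (mul d d) b) → D e a b
  rs5 : ∀ a b c d e : G, mul a d = mul b d → mul a e = mul b e → D c d e → mul a c = mul b c
  rs6 : ∀ a b c : G, D c a b →
    toTernaryStruct.Dt c (mul (mul c c) a) (mul (mul c c) b)
  rs8 : ∀ a b c : G, D a b c → D (mul a a) (mul b b) (mul c c)

/-- A real semigroup: [RS0]-[RS8]. -/
structure RealSemigroup (G : Type u) extends PreRealSemigroupAux G where
  rs7 : ∀ a b x : G, toTernaryStruct.Dt x a (toTernaryStruct.neg b) →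
    toTernaryStruct.Dt x b (toTernaryStruct.neg a) → a = b

/-- A pre-real semigroup: [RS0]-[RS6], [RS8] and [RS7']. -/
structure PreRealSemigroup (G : Type u) extends PreRealSemigroupAux G where
  rs7' : ∀ x a : G, toTernaryStruct.Dt x zero a ↔ x = a

/-- Morphism of pre-real semigroups: preserves `·`, `1`, `0`, `−1` and `D`. -/
def IsPRSHom {G : Type u} {H : Type v} (S : PreRealSemigroup G) (T : PreRealSemigroup H)
    (f : G → H) : Prop :=
  f S.one = T.one ∧ f S.zero = T.zero ∧ f S.negOne = T.negOne ∧
  (∀ a b : G, f (S.mul a b) = T.mul (f a) (f b)) ∧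
  (∀ a b c : G, S.D a b c → T.D (f a) (f b) (f c))

/-! ## Quadratic forms and isometry -/

/-- Weak isometry of forms (as lists of entries) over a multiring. -/
inductive WeakIsom {A : Type u} (M : Multiring A) : List A → List A → Prop
  | one (a : A) : WeakIsom M [a] [a]
  | two (a b c d : A) : M.mul a b = M.mul c d → (M.add a b ∩ M.add c d).Nonempty →
      WeakIsom M [a, b] [c, d]
  | step (a₁ b₁ x y : A) (as bs zs : List A) :
      2 ≤ as.length → as.length = bs.length → zs.length + 1 = as.length →
      WeakIsom M [a₁, x] [b₁, y] → WeakIsom M as (x :: zs) → WeakIsom M bs (y :: zs) →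
      WeakIsom M (a₁ :: as) (b₁ :: bs)

/-- Strong isometry of forms (as lists of entries) over a multiring. -/
inductive StrongIsom {A : Type u} (M : Multiring A) : List A → List A → Prop
  | one (a : A) : StrongIsom M [a] [a]
  | two (a b c d : A) : M.mul a b = M.mul c d → M.add a b = M.add c d →
      StrongIsom M [a, b] [c, d]
  | step (a₁ b₁ x y : A) (as bs zs : List A) :
      2 ≤ as.length → as.length = bs.length → zs.length + 1 = as.length →
      StrongIsom M [a₁, x] [b₁, y] → StrongIsom M as (x :: zs) → StrongIsom M bs (y :: zs) →
      StrongIsom M (a₁ :: as) (b₁ :: bs)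

/-- The carrier of `Q_red(A) = Q_{ΣA²}(A)`: the image of `A` in `Q₂^{Sper(A)}`
(recall `X_{ΣA²} = Sper(A)`). -/
def Multiring.Qredcar {A : Type u} (M : Multiring A) : Set (M.Sper → SignType) :=
  Set.range M.hat

/-- The map `a ↦ ā` from `A` onto `Q_red(A)`. -/
def Multiring.evalQred {A : Type u} (M : Multiring A) (a : A) : M.Qredcar :=
  ⟨M.hat a, a, rfl⟩

/-!
If `a ↦ ā` is injective, `A` embeds into a power of `Q₂`, where (a)–(c) hold coordinatewise.

Conversely, assume (a)–(c). Every sum of squares `s` is then idempotent with `x + xs = {x}`,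
and a sum of two sums of squares is single-valued. Hence `−1 ∈ ΣA²[−w]` forces `w = 1`: the
element `1` would lie in the additively closed set `{s ∈ ΣA² : sw = s}`. So for `w ≠ 1` the
preordering `ΣA²[−w]` is proper; a maximal proper preordering above it is an ordering, and its
sign character `σ` has `σ(w) ≠ 1`. Applied in the localization `{x : a²x = x}`, whose unit is
`a²`, to `w = ab`, this separates `a²` from `ab` whenever they differ; and `a² = ab`,
`b² = ba` give `a = b` by (a). So `a ↦ ā` is injective, and the structure of `A` transports
to `Q_red(A)`.
-/

theorem Q2add_mul_mul_self (s t : SignType) : Q2add s (s * (t * t)) = {s} := by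
  cases s <;> cases t <;> simp [Q2add]

theorem Q2add_mul_self_subsingleton (s t : SignType) : (Q2add (s * s) (t * t)).Subsingleton := by
  cases s <;> cases t <;> simp [Q2add, Set.subsingleton_singleton]

namespace Multiring

variable {A : Type u} {B : Type v} (M : Multiring A)

section Arithmetic

theorem exists_add_assoc {a b d x c : A} (hc : c ∈ M.add a x) (hx : x ∈ M.add b d) :
    ∃ y ∈ M.add a b, c ∈ M.add y d := by
  have h : c ∈ ⋃ x ∈ M.add b d, M.add a x := Set.mem_biUnion hx hc
  rw [M.add_assoc'] at h
  simpa using h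

theorem exists_add_assoc' {a b d x c : A} (hc : c ∈ M.add x d) (hx : x ∈ M.add a b) :
    ∃ y ∈ M.add b d, c ∈ M.add a y := by
  rw [M.add_comm'] at hc hx
  obtain ⟨y, hy, hcy⟩ := M.exists_add_assoc hc hx
  exact ⟨y, by rwa [M.add_comm'], by rwa [M.add_comm']⟩

theorem neg_neg (a : A) : M.neg (M.neg a) = a := by
  have h := M.zero_mem_add_neg a
  rw [M.add_comm'] at h
  exact (M.neg_unique _ _ h).symm

theorem neg_zero : M.neg M.zero = M.zero := by
  have h : M.zero ∈ M.add M.zero M.zero := by rw [M.add_zero']; rfl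
  exact (M.neg_unique _ _ h).symm

theorem mul_neg (a b : A) : M.mul a (M.neg b) = M.neg (M.mul a b) := by
  have h := M.mul_mem_add a b (M.neg b) M.zero (M.zero_mem_add_neg b)
  rw [M.mul_zero'] at h
  exact M.neg_unique _ _ h

theorem neg_mul (a b : A) : M.mul (M.neg a) b = M.neg (M.mul a b) := by
  rw [M.mul_comm', mul_neg, M.mul_comm']

theorem neg_mul_neg (a b : A) : M.mul (M.neg a) (M.neg b) = M.mul a b := by
  rw [neg_mul, mul_neg, neg_neg]

theorem one_mul (a : A) : M.mul M.one a = a := by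
  rw [M.mul_comm', M.mul_one']

theorem mul_mul_mul_comm (a b c d : A) :
    M.mul (M.mul a b) (M.mul c d) = M.mul (M.mul a c) (M.mul b d) := by
  rw [M.mul_assoc', ← M.mul_assoc' b c d, M.mul_comm' b c, M.mul_assoc' c b d,
    ← M.mul_assoc']

theorem neg_mem_add_neg {a b c : A} (h : c ∈ M.add a b) :
    M.neg c ∈ M.add (M.neg a) (M.neg b) := by
  simpa only [neg_mul, one_mul] using M.mul_mem_add (M.neg M.one) a b c h

theorem mem_neg_add_of_mem_add {a b c : A} (h : c ∈ M.add a b) :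
    b ∈ M.add (M.neg a) c := by
  rw [M.add_comm'] at h ⊢
  exact M.mem_add_reverse _ _ _ h

theorem neg_mem_add_of_mem_add {a b c : A} (h : c ∈ M.add a b) :
    M.neg b ∈ M.add a (M.neg c) := by
  simpa only [neg_neg] using M.mem_neg_add_of_mem_add (M.neg_mem_add_neg h)

end Arithmetic

namespace IsSperMap

variable {M} {σ : A → SignType}

theorem map_one (hσ : M.IsSperMap σ) : σ M.one = 1 := hσ.2.1

theorem map_mul (hσ : M.IsSperMap σ) (a b : A) : σ (M.mul a b) = σ a * σ b := hσ.2.2.2.1 a b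

theorem map_mem_add (hσ : M.IsSperMap σ) {a b c : A} (hc : c ∈ M.add a b) :
    σ c ∈ Q2add (σ a) (σ b) :=
  hσ.2.2.2.2 a b c hc

theorem comp {N : Multiring B} {σ : B → SignType} (hσ : N.IsSperMap σ) {f : A → B}
    (hf : IsHom M N f) : M.IsSperMap (σ ∘ f) := by
  obtain ⟨hσ0, hσ1, hσneg, hσmul, hσadd⟩ := hσ
  obtain ⟨hf0, hf1, hfneg, hfmul, hfadd⟩ := hf
  refine ⟨?_, ?_, fun a => ?_, fun a b => ?_, fun a b c hc => hσadd _ _ _ (hfadd a b c hc)⟩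
  · simp only [Function.comp_apply, hf0, hσ0]
  · simp only [Function.comp_apply, hf1, hσ1]
  · simp only [Function.comp_apply, hfneg, hσneg]
  · simp only [Function.comp_apply, hfmul, hσmul]

end IsSperMap

inductive IsSum (S : Set A) : A → Prop
  | of_mem {x : A} : x ∈ S → IsSum S x
  | add {s b c : A} : s ∈ S → IsSum S b → c ∈ M.add s b → IsSum S c

namespace IsSum

variable {M} {S S' : Set A}

theorem mono (h : S ⊆ S') {a : A} (ha : M.IsSum S a) : M.IsSum S' a := by
  induction ha with
  | of_mem hx => exact of_mem (h hx)
  | add hs _ hc ih => exact add (h hs) ih hc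

theorem of_mem_add {x y c : A} (hx : M.IsSum S x) (hy : M.IsSum S y) (hc : c ∈ M.add x y) :
    M.IsSum S c := by
  induction hx generalizing c with
  | of_mem hx => exact add hx hy hc
  | add hs _ hx ih =>
    obtain ⟨u, hu, hcu⟩ := M.exists_add_assoc' hc hx
    exact add hs (ih hu) hcu

theorem mem {T : Set A} (hT : ∀ a ∈ T, ∀ b ∈ T, M.add a b ⊆ T) (hST : S ⊆ T) {c : A}
    (hc : M.IsSum S c) : c ∈ T := by
  induction hc with
  | of_mem hx => exact hST hx
  | add hs _ hc ih => exact hT _ (hST hs) _ ih hc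

theorem neg {c : A} (hc : M.IsSum S c) : M.IsSum (M.neg '' S) (M.neg c) := by
  induction hc with
  | of_mem hx => exact of_mem (Set.mem_image_of_mem _ hx)
  | add hs _ hc ih => exact add (Set.mem_image_of_mem _ hs) ih (M.neg_mem_add_neg hc)

theorem mul_left {c : A} (x : A) (hc : M.IsSum S c) :
    M.IsSum (M.mul x '' S) (M.mul x c) := by
  induction hc with
  | of_mem hy => exact of_mem (Set.mem_image_of_mem _ hy)
  | add hs _ hc ih => exact add (Set.mem_image_of_mem _ hs) ih (M.mul_mem_add x _ _ _ hc)

theorem mul {a b : A} (ha : M.IsSum S a) (hb : M.IsSum S' b) :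
    M.IsSum (Set.image2 M.mul S S') (M.mul a b) := by
  induction ha with
  | of_mem hx => exact (hb.mul_left _).mono (Set.image_subset_image2_right hx)
  | @add s c a hs _ ha ih =>
    have hsb := (hb.mul_left s).mono (Set.image_subset_image2_right hs)
    have hab := M.mul_mem_add b s c a ha
    rw [M.mul_comm' b s, M.mul_comm' b c, M.mul_comm' b a] at hab
    exact of_mem_add hsb ih hab

theorem union_cases {c : A} (hc : M.IsSum (S ∪ S') c) :
    M.IsSum S c ∨ M.IsSum S' c ∨ ∃ x y, M.IsSum S x ∧ M.IsSum S' y ∧ c ∈ M.add x y := by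
  induction hc with
  | of_mem hx => exact hx.imp of_mem (fun h => Or.inl (of_mem h))
  | @add s b c hs _ hc ih =>
    rcases hs with hs | hs
    · rcases ih with ih | ih | ⟨x, y, hx, hy, hxy⟩
      · exact Or.inl (add hs ih hc)
      · exact Or.inr (Or.inr ⟨s, b, of_mem hs, ih, hc⟩)
      · obtain ⟨u, hu, hcu⟩ := M.exists_add_assoc hc hxy
        exact Or.inr (Or.inr ⟨u, y, of_mem_add (of_mem hs) hx hu, hy, hcu⟩)
    · rw [M.add_comm'] at hc
      rcases ih with ih | ih | ⟨x, y, hx, hy, hxy⟩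
      · exact Or.inr (Or.inr ⟨b, s, ih, of_mem hs, hc⟩)
      · rw [M.add_comm'] at hc
        exact Or.inr (Or.inl (add hs ih hc))
      · obtain ⟨u, hu, hcu⟩ := M.exists_add_assoc' hc hxy
        exact Or.inr (Or.inr ⟨x, u, hx, of_mem_add hy (of_mem hs) hu, hcu⟩)

end IsSum

namespace SumSq

variable {M}

theorem of_mem_add {x y c : A} (hx : M.SumSq x) (hy : M.SumSq y) (hc : c ∈ M.add x y) :
    M.SumSq c := by
  induction hx generalizing c with
  | sq a => exact step a y c hy hc
  | step a b x _ hx ih =>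
    obtain ⟨u, hu, hcu⟩ := M.exists_add_assoc' hc hx
    exact step a u c (ih hu) hcu

theorem mul_self_mul (a : A) {t : A} (ht : M.SumSq t) : M.SumSq (M.mul (M.mul a a) t) := by
  induction ht with
  | sq b => rw [mul_mul_mul_comm]; exact sq _
  | step b t c _ hc ih =>
    have h := M.mul_mem_add (M.mul a a) _ _ c hc
    rw [mul_mul_mul_comm] at h
    exact step _ _ _ ih h

theorem mul {s t : A} (hs : M.SumSq s) (ht : M.SumSq t) : M.SumSq (M.mul s t) := by
  induction hs with
  | sq a => exact mul_self_mul a ht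
  | step a b s _ hs ih =>
    have h := M.mul_mem_add t _ _ s hs
    rw [M.mul_comm' t (M.mul a a), M.mul_comm' t b, M.mul_comm' t s] at h
    exact of_mem_add (mul_self_mul a ht) ih h

end SumSq

theorem isPreordering_sumSq : M.IsPreordering {x | M.SumSq x} :=
  ⟨fun _ ha _ hb _ hc => ha.of_mem_add hb hc, fun _ ha _ hb => ha.mul hb, SumSq.sq⟩

structure IsReduced : Prop where
  cube : ∀ a : A, M.mul a (M.mul a a) = a
  add_mul_mul_self : ∀ a b : A, M.add a (M.mul a (M.mul b b)) = {a}
  existsUnique_add_mul_self : ∀ a b : A, ∃! c : A, c ∈ M.add (M.mul a a) (M.mul b b)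

section Reduced

variable {M}

theorem mul_self_mul_self_of_cube (hcube : ∀ a : A, M.mul a (M.mul a a) = a) (a : A) :
    M.mul (M.mul a a) (M.mul a a) = M.mul a a := by
  rw [← M.mul_assoc', M.mul_comm' (M.mul a a) a, hcube]

theorem add_mul_sumSq (habs : ∀ a b : A, M.add a (M.mul a (M.mul b b)) = {a}) {s : A}
    (hs : M.SumSq s) (x : A) : M.add x (M.mul x s) = {x} := by
  induction hs with
  | sq b => exact habs x b
  | step a b s _ hs ih =>
    refine (M.add_nonempty _ _).subset_singleton_iff.mp fun c hc => ?_
    obtain ⟨y, hy, hcy⟩ := M.exists_add_assoc hc (M.mul_mem_add x _ _ s hs)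
    rw [habs x a, Set.mem_singleton_iff] at hy
    rwa [hy, ih] at hcy

theorem one_add_sumSq (habs : ∀ a b : A, M.add a (M.mul a (M.mul b b)) = {a}) {s : A}
    (hs : M.SumSq s) : M.add M.one s = {M.one} := by
  simpa only [one_mul] using add_mul_sumSq habs hs M.one

theorem mul_self_mul_eq_of_mem_add (hcube : ∀ a : A, M.mul a (M.mul a a) = a)
    (habs : ∀ a b : A, M.add a (M.mul a (M.mul b b)) = {a}) {a b c : A}
    (hc : c ∈ M.add (M.mul a a) (M.mul b b)) : M.mul (M.mul a a) c = M.mul a a := by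
  have h := M.mul_mem_add (M.mul a a) _ _ c hc
  rwa [mul_self_mul_self_of_cube hcube, habs] at h

theorem IsReduced.mul_self_eq_of_mem_add (hM : M.IsReduced) {a b c : A}
    (hc : c ∈ M.add (M.mul a a) (M.mul b b)) : M.mul c c = c := by
  have hc' : c ∈ M.add (M.mul b b) (M.mul a a) := by rwa [M.add_comm']
  have h := M.mul_mem_add c _ _ c hc
  rw [M.mul_comm' c, M.mul_comm' c, mul_self_mul_eq_of_mem_add hM.cube hM.add_mul_mul_self hc,
    mul_self_mul_eq_of_mem_add hM.cube hM.add_mul_mul_self hc'] at h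
  exact (hM.existsUnique_add_mul_self a b).unique h hc

theorem IsReduced.eq_of_mem_add_mul_self_sumSq (hM : M.IsReduced) {s : A}
    (hs : M.SumSq s) {x c c' : A} (hc : c ∈ M.add (M.mul x x) s)
    (hc' : c' ∈ M.add (M.mul x x) s) : c = c' := by
  induction hs generalizing x with
  | sq y => exact (hM.existsUnique_add_mul_self x y).unique hc hc'
  | step y b s _ hs ih =>
    obtain ⟨u, hu, hcu⟩ := M.exists_add_assoc hc hs
    obtain ⟨v, hv, hcv⟩ := M.exists_add_assoc hc' hs
    obtain rfl : v = u := (hM.existsUnique_add_mul_self x y).unique hv hu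
    rw [← hM.mul_self_eq_of_mem_add hu] at hcu hcv
    exact ih hcu hcv

theorem IsReduced.mul_self_eq_of_sumSq (hM : M.IsReduced) {s : A}
    (hs : M.SumSq s) : M.mul s s = s := by
  induction hs with
  | sq a => exact mul_self_mul_self_of_cube hM.cube a
  | step a b s hb hs ih =>
    have has : M.mul (M.mul a a) s = M.mul a a := by
      have h := M.mul_mem_add (M.mul a a) _ _ s hs
      rwa [mul_self_mul_self_of_cube hM.cube, add_mul_sumSq hM.add_mul_mul_self hb] at h
    have hbs : M.mul b s = b := by
      have h := M.mul_mem_add b _ _ s hs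
      rwa [ih, M.add_comm', add_mul_sumSq hM.add_mul_mul_self (SumSq.sq a)] at h
    have h := M.mul_mem_add s _ _ s hs
    rw [M.mul_comm' s (M.mul a a), has, M.mul_comm' s b, hbs] at h
    exact hM.eq_of_mem_add_mul_self_sumSq hb h hs

theorem IsReduced.eq_of_mem_add_sumSq (hM : M.IsReduced) {s t c c' : A}
    (hs : M.SumSq s) (ht : M.SumSq t) (hc : c ∈ M.add s t) (hc' : c' ∈ M.add s t) : c = c' := by
  rw [← hM.mul_self_eq_of_sumSq hs] at hc hc'
  exact hM.eq_of_mem_add_mul_self_sumSq ht hc hc'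

end Reduced

def adjoin (T : Set A) (x : A) : Set A :=
  {c | M.IsSum (T ∪ (M.mul · x) '' T) c}

theorem subset_adjoin (T : Set A) (x : A) : T ⊆ M.adjoin T x :=
  fun _ ht => IsSum.of_mem (Or.inl ht)

namespace IsPreordering

variable {M} {T : Set A}

theorem mul_self_mem (hT : M.IsPreordering T) (a : A) : M.mul a a ∈ T :=
  hT.2.2 a

theorem zero_mem (hT : M.IsPreordering T) : M.zero ∈ T := by
  simpa only [M.mul_zero'] using hT.mul_self_mem M.zero

theorem one_mem (hT : M.IsPreordering T) : M.one ∈ T := by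
  simpa only [M.mul_one'] using hT.mul_self_mem M.one

theorem add_mem (hT : M.IsPreordering T) {a b c : A} (ha : a ∈ T) (hb : b ∈ T)
    (hc : c ∈ M.add a b) : c ∈ T :=
  hT.1 a ha b hb hc

theorem mul_mem (hT : M.IsPreordering T) {a b : A} (ha : a ∈ T) (hb : b ∈ T) :
    M.mul a b ∈ T :=
  hT.2.1 a ha b hb

theorem adjoin (hT : M.IsPreordering T) (x : A) : M.IsPreordering (M.adjoin T x) := by
  refine ⟨fun a ha b hb c hc => IsSum.of_mem_add ha hb hc, fun a ha b hb => ?_,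
    fun a => IsSum.of_mem (Or.inl (hT.mul_self_mem a))⟩
  refine (IsSum.mul ha hb).mono ?_
  rintro _ ⟨u, hu | ⟨t, ht, rfl⟩, v, hv | ⟨t', ht', rfl⟩, rfl⟩
  · exact Or.inl (hT.mul_mem hu hv)
  · exact Or.inr ⟨M.mul u t', hT.mul_mem hu ht', M.mul_assoc' u t' x⟩
  · refine Or.inr ⟨M.mul t v, hT.mul_mem ht hv, ?_⟩
    simp only [M.mul_assoc', M.mul_comm' x v]
  · refine Or.inl ?_
    rw [mul_mul_mul_comm]
    exact hT.mul_mem (hT.mul_mem ht ht') (hT.mul_self_mem x)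

theorem mem_adjoin_self (hT : M.IsPreordering T) (x : A) : x ∈ M.adjoin T x :=
  IsSum.of_mem (Or.inr ⟨M.one, hT.one_mem, M.one_mul x⟩)

theorem exists_mem_add_of_mem_adjoin (hT : M.IsPreordering T) {x c : A} (hc : c ∈ M.adjoin T x) :
    ∃ p ∈ T, ∃ q, M.IsSum ((M.mul · x) '' T) q ∧ c ∈ M.add p q := by
  rcases IsSum.union_cases hc with hc | hc | ⟨p, q, hp, hq, hpq⟩
  · refine ⟨c, hc.mem hT.1 subset_rfl, M.zero, IsSum.of_mem ⟨M.zero, hT.zero_mem, ?_⟩, ?_⟩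
    · exact (M.mul_comm' _ _).trans (M.mul_zero' x)
    · rw [M.add_zero']; rfl
  · refine ⟨M.zero, hT.zero_mem, c, hc, ?_⟩
    rw [M.add_comm', M.add_zero']; rfl
  · exact ⟨p, hp.mem hT.1 subset_rfl, q, hq, hpq⟩

theorem neg_one_mem_of_neg_one_mem_adjoin (hT : M.IsPreordering T) {x : A}
    (h : M.neg M.one ∈ M.adjoin T x) (h' : M.neg M.one ∈ M.adjoin T (M.neg x)) :
    M.neg M.one ∈ T := by
  obtain ⟨p, hp, q, hq, hpq⟩ := hT.exists_mem_add_of_mem_adjoin h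
  obtain ⟨p', hp', q', hq', hpq'⟩ := hT.exists_mem_add_of_mem_adjoin h'
  have hnq : M.neg q ∈ M.add M.one p := by
    simpa only [neg_neg, M.add_comm' p] using M.neg_mem_add_of_mem_add hpq
  have hnq' : M.neg q' ∈ M.add M.one p' := by
    simpa only [neg_neg, M.add_comm' p'] using M.neg_mem_add_of_mem_add hpq'
  have hqq' : M.neg (M.mul q q') ∈ T := by
    refine (IsSum.mul hq hq').neg.mem hT.1 ?_
    rintro _ ⟨_, ⟨_, ⟨t, ht, rfl⟩, _, ⟨t', ht', rfl⟩, rfl⟩, rfl⟩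
    rw [mul_mul_mul_comm, M.mul_neg, M.mul_neg, neg_neg]
    exact hT.mul_mem (hT.mul_mem ht ht') (hT.mul_self_mem x)
  have hpq'T : M.mul p (M.neg q') ∈ T := by
    have h := M.mul_mem_add p _ _ _ hnq'
    rw [M.mul_one'] at h
    exact hT.add_mem hp (hT.mul_mem hp hp') h
  have h4 : M.mul q q' ∈ M.add (M.neg q') (M.mul p (M.neg q')) := by
    have h := M.mul_mem_add (M.neg q') _ _ _ hnq
    rwa [M.mul_one', neg_mul_neg, M.mul_comm' q', M.mul_comm' (M.neg q') p] at h
  obtain ⟨v, hv, hqq'v⟩ := M.exists_add_assoc' h4 hnq'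
  rw [M.add_comm'] at hqq'v
  exact hT.add_mem (hT.add_mem hp' hpq'T hv) hqq' (M.neg_mem_add_of_mem_add hqq'v)

end IsPreordering

structure IsOrdering (P : Set A) : Prop where
  isPreordering : M.IsPreordering P
  neg_one_not_mem : M.neg M.one ∉ P
  mem_or_neg_mem : ∀ x : A, x ∈ P ∨ M.neg x ∈ P
  supp_prime : ∀ a b : A, M.mul a b ∈ P → M.neg (M.mul a b) ∈ P →
    (a ∈ P ∧ M.neg a ∈ P) ∨ (b ∈ P ∧ M.neg b ∈ P)

abbrev IsMaximalPreordering (P : Set A) : Prop :=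
  Maximal (fun P => M.IsPreordering P ∧ M.neg M.one ∉ P) P

theorem exists_isMaximalPreordering_superset {T : Set A} (hT : M.IsPreordering T)
    (hproper : M.neg M.one ∉ T) :
    ∃ P, T ⊆ P ∧ M.IsMaximalPreordering P := by
  refine zorn_subset_nonempty _ (fun c hc hchain ⟨P₀, hP₀⟩ => ?_) T ⟨hT, hproper⟩
  refine ⟨⋃₀ c, ⟨⟨?_, ?_, ?_⟩, ?_⟩, fun P hP => Set.subset_sUnion_of_mem hP⟩
  · rintro a ⟨Pa, hPa, ha⟩ b ⟨Pb, hPb, hb⟩ x hx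
    rcases hchain.total hPa hPb with h | h
    · exact ⟨Pb, hPb, (hc hPb).1.add_mem (h ha) hb hx⟩
    · exact ⟨Pa, hPa, (hc hPa).1.add_mem ha (h hb) hx⟩
  · rintro a ⟨Pa, hPa, ha⟩ b ⟨Pb, hPb, hb⟩
    rcases hchain.total hPa hPb with h | h
    · exact ⟨Pb, hPb, (hc hPb).1.mul_mem (h ha) hb⟩
    · exact ⟨Pa, hPa, (hc hPa).1.mul_mem ha (h hb)⟩
  · exact fun a => ⟨P₀, hP₀, (hc hP₀).1.mul_self_mem a⟩
  · rintro ⟨P, hP, h⟩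
    exact (hc hP).2 h

section Maximal

variable {M} {P : Set A}

theorem IsMaximalPreordering.neg_one_mem_adjoin (hP : M.IsMaximalPreordering P) {x : A}
    (hx : x ∉ P) : M.neg M.one ∈ M.adjoin P x := by
  by_contra h
  exact hx (hP.2 ⟨hP.1.1.adjoin x, h⟩ (M.subset_adjoin P x) (hP.1.1.mem_adjoin_self x))

theorem IsMaximalPreordering.mem_or_neg_mem (hP : M.IsMaximalPreordering P) (x : A) :
    x ∈ P ∨ M.neg x ∈ P := by
  by_contra! h
  exact hP.1.2 (hP.1.1.neg_one_mem_of_neg_one_mem_adjoin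
    (hP.neg_one_mem_adjoin h.1) (hP.neg_one_mem_adjoin h.2))

theorem IsMaximalPreordering.neg_mem (hP : M.IsMaximalPreordering P)
    {a b : A} (ha : M.neg a ∉ P) (hb : b ∈ P) (hab : M.neg (M.mul a b) ∈ P) :
    M.neg b ∈ P := by
  have hP' := hP.1.1
  obtain ⟨p, hp, q, hq, hpq⟩ :=
    hP'.exists_mem_add_of_mem_adjoin (hP.neg_one_mem_adjoin ha)
  have hbq : M.mul b q ∈ P := by
    refine (hq.mul_left b).mem hP'.1 ?_
    rintro _ ⟨_, ⟨t, ht, rfl⟩, rfl⟩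
    have h : M.mul b (M.mul t (M.neg a)) = M.mul t (M.neg (M.mul a b)) := by
      rw [M.mul_neg, M.mul_neg, M.mul_neg, ← M.mul_assoc', M.mul_comm' b t, M.mul_assoc',
        M.mul_comm' b a]
    rw [h]
    exact hP'.mul_mem ht hab
  have h := M.mul_mem_add b _ _ _ hpq
  rw [M.mul_neg, M.mul_one'] at h
  exact hP'.add_mem (hP'.mul_mem hb hp) hbq h

theorem IsMaximalPreordering.mem_supp (hP : M.IsMaximalPreordering P)
    {a b : A} (ha : M.neg a ∉ P) (hab : M.mul a b ∈ P) (hab' : M.neg (M.mul a b) ∈ P) :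
    b ∈ P ∧ M.neg b ∈ P := by
  rcases hP.mem_or_neg_mem b with hb | hb
  · exact ⟨hb, hP.neg_mem ha hb hab'⟩
  · refine ⟨?_, hb⟩
    rw [← M.neg_neg b]
    exact hP.neg_mem ha hb (by rwa [M.mul_neg, M.neg_neg])

theorem IsMaximalPreordering.isOrdering (hP : M.IsMaximalPreordering P) : M.IsOrdering P := by
  refine ⟨hP.1.1, hP.1.2, hP.mem_or_neg_mem, fun a b hab hab' => ?_⟩
  by_cases ha : M.neg a ∈ P
  · by_cases ha' : a ∈ P
    · exact Or.inl ⟨ha', ha⟩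
    · refine Or.inr (hP.mem_supp (a := M.neg a) (by rwa [M.neg_neg]) ?_ ?_)
      · rwa [M.neg_mul]
      · rwa [M.neg_mul, M.neg_neg]
  · exact Or.inr (hP.mem_supp ha hab hab')

end Maximal

open Classical in
noncomputable def sgn (P : Set A) (a : A) : SignType :=
  if a ∈ P then if M.neg a ∈ P then 0 else 1 else -1

theorem zero_le_sgn_iff {P : Set A} {a : A} : 0 ≤ M.sgn P a ↔ a ∈ P := by
  unfold sgn
  split_ifs with ha <;> simp only [ha, iff_true, iff_false] <;> decide

namespace IsOrdering

variable {M} {P : Set A}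

theorem sgn_neg (hP : M.IsOrdering P) (a : A) : M.sgn P (M.neg a) = -M.sgn P a := by
  have := hP.mem_or_neg_mem a
  by_cases ha : a ∈ P <;> by_cases ha' : M.neg a ∈ P <;> simp_all [sgn, M.neg_neg]

theorem mul_mem_iff (hP : M.IsOrdering P) {a b : A} :
    M.mul a b ∈ P ↔ (a ∈ P ∧ b ∈ P) ∨ (M.neg a ∈ P ∧ M.neg b ∈ P) := by
  have hT := hP.isPreordering
  constructor
  · intro hab
    rcases hP.mem_or_neg_mem a with ha | ha <;> rcases hP.mem_or_neg_mem b with hb | hb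
    · exact Or.inl ⟨ha, hb⟩
    · have hab' : M.neg (M.mul a b) ∈ P := by rw [← M.mul_neg]; exact hT.mul_mem ha hb
      exact (hP.supp_prime a b hab hab').elim (fun h => Or.inr ⟨h.2, hb⟩)
        (fun h => Or.inl ⟨ha, h.1⟩)
    · have hab' : M.neg (M.mul a b) ∈ P := by rw [← M.neg_mul]; exact hT.mul_mem ha hb
      exact (hP.supp_prime a b hab hab').elim (fun h => Or.inl ⟨h.1, hb⟩)
        (fun h => Or.inr ⟨ha, h.2⟩)
    · exact Or.inr ⟨ha, hb⟩
  · rintro (⟨ha, hb⟩ | ⟨ha, hb⟩)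
    · exact hT.mul_mem ha hb
    · rw [← M.neg_mul_neg]; exact hT.mul_mem ha hb

theorem sgn_mul (hP : M.IsOrdering P) (a b : A) :
    M.sgn P (M.mul a b) = M.sgn P a * M.sgn P b := by
  have hpos := hP.mul_mem_iff (a := a) (b := b)
  have hneg := hP.mul_mem_iff (a := a) (b := M.neg b)
  rw [M.mul_neg, M.neg_neg] at hneg
  simp only [← M.zero_le_sgn_iff, hP.sgn_neg] at hpos hneg
  generalize M.sgn P (M.mul a b) = r at hpos hneg
  generalize M.sgn P a = s at hpos hneg
  generalize M.sgn P b = t at hpos hneg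
  revert r s t
  decide

theorem sgn_add (hP : M.IsOrdering P) {a b c : A} (hc : c ∈ M.add a b) :
    M.sgn P c ∈ Q2add (M.sgn P a) (M.sgn P b) := by
  have key : ∀ r s t : SignType, (0 ≤ s → 0 ≤ t → 0 ≤ r) → (0 ≤ -s → 0 ≤ -t → 0 ≤ -r) →
      (0 ≤ s → 0 ≤ -r → 0 ≤ -t) → (0 ≤ -s → 0 ≤ r → 0 ≤ t) →
      (0 ≤ t → 0 ≤ -r → 0 ≤ -s) → (0 ≤ -t → 0 ≤ r → 0 ≤ s) → r ∈ Q2add s t := by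
    intro r s t
    cases r <;> cases s <;> cases t <;> simp [Q2add]
  have hT := hP.isPreordering
  have hc' : c ∈ M.add b a := by rwa [M.add_comm']
  -- the six clauses of `key` are cone membership along the rotations of `c ∈ a + b`:
  -- `−c ∈ −a + −b`, `−b ∈ a + −c`, `b ∈ −a + c`, and the same with `a`, `b` swapped
  apply key <;> simp only [← hP.sgn_neg, M.zero_le_sgn_iff]
  · exact fun ha hb => hT.add_mem ha hb hc
  · exact fun ha hb => hT.add_mem ha hb (M.neg_mem_add_neg hc)
  · exact fun ha hnc => hT.add_mem ha hnc (M.neg_mem_add_of_mem_add hc)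
  · exact fun ha hnc => hT.add_mem ha hnc (M.mem_neg_add_of_mem_add hc)
  · exact fun hb hnc => hT.add_mem hb hnc (M.neg_mem_add_of_mem_add hc')
  · exact fun hb hnc => hT.add_mem hb hnc (M.mem_neg_add_of_mem_add hc')

theorem isSperMap_sgn (hP : M.IsOrdering P) : M.IsSperMap (M.sgn P) := by
  refine ⟨?_, ?_, hP.sgn_neg, hP.sgn_mul, fun a b c => hP.sgn_add⟩
  · simp [sgn, hP.isPreordering.zero_mem, M.neg_zero]
  · simp [sgn, hP.isPreordering.one_mem, hP.neg_one_not_mem]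

end IsOrdering

section Separation

variable {M}

theorem IsReduced.eq_one_of_neg_one_mem_sum (hM : M.IsReduced) {w : A}
    (h : M.IsSum ((M.mul · (M.neg w)) '' {x | M.SumSq x}) (M.neg M.one)) : w = M.one := by
  have h1 : M.IsSum ((M.mul · w) '' {x | M.SumSq x}) M.one := by
    rw [← M.neg_neg M.one]
    refine h.neg.mono ?_
    rintro _ ⟨_, ⟨t, ht, rfl⟩, rfl⟩
    exact ⟨t, ht, by simp only [M.mul_neg, M.neg_neg]⟩
  have hw : M.SumSq w := by
    have h2 := h1.mul_left w
    rw [M.mul_one'] at h2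
    refine h2.mem (fun _ ha _ hb _ hc => ha.of_mem_add hb hc) ?_
    rintro _ ⟨_, ⟨t, ht, rfl⟩, rfl⟩
    change M.SumSq (M.mul w (M.mul t w))
    rw [M.mul_comm' t, ← M.mul_assoc']
    exact SumSq.mul_self_mul w ht
  have hone : M.one ∈ {x | M.SumSq x ∧ M.mul x w = x} := by
    refine h1.mem ?_ ?_
    · rintro a ⟨ha, haw⟩ b ⟨hb, hbw⟩ c hc
      refine ⟨ha.of_mem_add hb hc, hM.eq_of_mem_add_sumSq ha hb ?_ hc⟩
      have hwc := M.mul_mem_add w a b c hc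
      rwa [M.mul_comm' w a, haw, M.mul_comm' w b, hbw, M.mul_comm'] at hwc
    · rintro _ ⟨t, ht, rfl⟩
      exact ⟨ht.mul hw, by rw [M.mul_assoc', hM.mul_self_eq_of_sumSq hw]⟩
  simpa only [M.one_mul] using hone.2

theorem IsReduced.eq_one_of_neg_one_mem_adjoin (hM : M.IsReduced) {w : A}
    (h : M.neg M.one ∈ M.adjoin {x | M.SumSq x} (M.neg w)) : w = M.one := by
  obtain ⟨p, hp, q, hq, hpq⟩ := M.isPreordering_sumSq.exists_mem_add_of_mem_adjoin h
  have hq1 : q = M.neg M.one := by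
    have hnq := M.neg_mem_add_of_mem_add hpq
    rw [M.neg_neg, M.add_comm', one_add_sumSq hM.add_mul_mul_self hp] at hnq
    rw [← M.neg_neg q, Set.mem_singleton_iff.mp hnq]
  exact hM.eq_one_of_neg_one_mem_sum (hq1 ▸ hq)

theorem IsReduced.exists_isSperMap_ne_one (hM : M.IsReduced) {w : A} (hw : w ≠ M.one) :
    ∃ σ, M.IsSperMap σ ∧ σ w ≠ 1 := by
  have hT := M.isPreordering_sumSq
  obtain ⟨P, hTP, hP⟩ := M.exists_isMaximalPreordering_superset (hT.adjoin (M.neg w))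
    fun h => hw (hM.eq_one_of_neg_one_mem_adjoin h)
  refine ⟨M.sgn P, hP.isOrdering.isSperMap_sgn, fun h => ?_⟩
  have hnw := M.zero_le_sgn_iff.mpr (hTP (hT.mem_adjoin_self (M.neg w)))
  rw [hP.isOrdering.sgn_neg, h] at hnw
  exact absurd hnw (by decide)

end Separation

section Localization

abbrev Loc (e : A) : Type u := {x : A // M.mul e x = x}

variable {M} {e : A}

theorem mul_mem_add_of_mul_eq {x y c : A} (hx : M.mul e x = x) (hy : M.mul e y = y)
    (hc : c ∈ M.add x y) : M.mul e c ∈ M.add x y := by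
  simpa only [hx, hy] using M.mul_mem_add e x y c hc

theorem mul_mul_eq_of_mul_self_eq (he : M.mul e e = e) (x : A) :
    M.mul e (M.mul e x) = M.mul e x := by
  rw [← M.mul_assoc', he]

variable (M)

def toLoc (he : M.mul e e = e) (x : A) : M.Loc e :=
  ⟨M.mul e x, mul_mul_eq_of_mul_self_eq he x⟩

def loc (he : M.mul e e = e) : Multiring (M.Loc e) where
  add u v := {c | c.1 ∈ M.add u.1 v.1}
  mul u v := ⟨M.mul u.1 v.1, by rw [← M.mul_assoc', u.2]⟩
  neg u := ⟨M.neg u.1, by rw [M.mul_neg, u.2]⟩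
  zero := ⟨M.zero, M.mul_zero' e⟩
  one := ⟨e, he⟩
  add_nonempty u v := by
    obtain ⟨c, hc⟩ := M.add_nonempty u.1 v.1
    exact ⟨M.toLoc he c, mul_mem_add_of_mul_eq u.2 v.2 hc⟩
  add_comm' u v := by
    ext c
    exact Set.ext_iff.mp (M.add_comm' u.1 v.1) c.1
  add_assoc' u v w := by
    ext c
    simp only [Set.mem_iUnion, Set.mem_ofPred_eq, exists_prop]
    constructor
    · rintro ⟨x, hx, hcx⟩
      obtain ⟨y, hy, hcy⟩ := M.exists_add_assoc hcx hx
      refine ⟨⟨M.mul e y, mul_mul_eq_of_mul_self_eq he y⟩, mul_mem_add_of_mul_eq u.2 v.2 hy,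
        ?_⟩
      simpa only [c.2, w.2] using M.mul_mem_add e y w.1 c.1 hcy
    · rintro ⟨y, hy, hcy⟩
      obtain ⟨x, hx, hcx⟩ := M.exists_add_assoc' hcy hy
      refine ⟨⟨M.mul e x, mul_mul_eq_of_mul_self_eq he x⟩, mul_mem_add_of_mul_eq v.2 w.2 hx,
        ?_⟩
      simpa only [c.2, u.2] using M.mul_mem_add e u.1 x c.1 hcx
  add_zero' u := by
    ext c
    simp only [Set.mem_ofPred_eq, M.add_zero', Set.mem_singleton_iff, Subtype.ext_iff]
  zero_mem_add_neg u := M.zero_mem_add_neg u.1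
  neg_unique u v h := Subtype.ext (M.neg_unique u.1 v.1 h)
  mem_add_reverse u v c h := M.mem_add_reverse u.1 v.1 c.1 h
  mul_comm' u v := Subtype.ext (M.mul_comm' u.1 v.1)
  mul_assoc' u v w := Subtype.ext (M.mul_assoc' u.1 v.1 w.1)
  mul_one' u := Subtype.ext ((M.mul_comm' u.1 e).trans u.2)
  mul_zero' u := Subtype.ext (M.mul_zero' u.1)
  mul_mem_add d u v c h := M.mul_mem_add d.1 u.1 v.1 c.1 h

theorem toLoc_self (he : M.mul e e = e) : M.toLoc he e = (M.loc he).one :=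
  Subtype.ext he

theorem isHom_toLoc (he : M.mul e e = e) : IsHom M (M.loc he) (M.toLoc he) := by
  refine ⟨Subtype.ext (M.mul_zero' e), Subtype.ext (M.mul_one' e),
    fun a => Subtype.ext (M.mul_neg e a), fun a b => Subtype.ext ?_,
    fun a b c hc => M.mul_mem_add e a b c hc⟩
  change M.mul e (M.mul a b) = M.mul (M.mul e a) (M.mul e b)
  rw [mul_mul_mul_comm, he]

variable {M}

theorem IsReduced.loc (hM : M.IsReduced) (he : M.mul e e = e) : (M.loc he).IsReduced where
  cube u := Subtype.ext (hM.cube u.1)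
  add_mul_mul_self u v := by
    ext c
    change c.1 ∈ M.add u.1 (M.mul u.1 (M.mul v.1 v.1)) ↔ c = u
    rw [hM.add_mul_mul_self, Set.mem_singleton_iff, Subtype.ext_iff]
  existsUnique_add_mul_self u v := by
    obtain ⟨c, hc, huniq⟩ := hM.existsUnique_add_mul_self u.1 v.1
    have hu : M.mul e (M.mul u.1 u.1) = M.mul u.1 u.1 := by rw [← M.mul_assoc', u.2]
    have hv : M.mul e (M.mul v.1 v.1) = M.mul v.1 v.1 := by rw [← M.mul_assoc', v.2]
    exact ⟨⟨c, huniq _ (mul_mem_add_of_mul_eq hu hv hc)⟩, hc,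
      fun c' hc' => Subtype.ext (huniq c'.1 hc')⟩

theorem IsReduced.mul_self_eq_mul_of_forall_isSperMap_eq (hM : M.IsReduced) {a b : A}
    (h : ∀ σ, M.IsSperMap σ → σ a = σ b) : M.mul a a = M.mul a b := by
  by_contra hne
  have he := mul_self_mul_self_of_cube hM.cube a
  have heab : M.mul (M.mul a a) (M.mul a b) = M.mul a b := by
    rw [← M.mul_assoc', M.mul_comm' (M.mul a a) a, hM.cube]
  have hw : M.toLoc he (M.mul a b) ≠ (M.loc he).one :=
    fun h1 => hne ((congrArg Subtype.val h1).symm.trans heab)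
  obtain ⟨τ, hτ, hτw⟩ := (hM.loc he).exists_isSperMap_ne_one hw
  have hσ := hτ.comp (M.isHom_toLoc he)
  apply hτw
  calc τ (M.toLoc he (M.mul a b)) = (τ ∘ M.toLoc he) a * (τ ∘ M.toLoc he) b :=
      hσ.map_mul a b
    _ = (τ ∘ M.toLoc he) (M.mul a a) := by rw [hσ.map_mul, h _ hσ]
    _ = 1 := by rw [Function.comp_apply, toLoc_self, hτ.map_one]

theorem IsReduced.hat_injective (hM : M.IsReduced) : Function.Injective M.hat := by
  intro a b hab
  have h : ∀ σ, M.IsSperMap σ → σ a = σ b := fun σ hσ => congrFun hab ⟨σ, hσ⟩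
  have hab := hM.mul_self_eq_mul_of_forall_isSperMap_eq h
  have hba := hM.mul_self_eq_mul_of_forall_isSperMap_eq fun σ hσ => (h σ hσ).symm
  calc a = M.mul a (M.mul a a) := (hM.cube a).symm
    _ = M.mul (M.mul a b) b := by rw [hab, ← M.mul_assoc', hab]
    _ = M.mul b (M.mul b b) := by rw [M.mul_comm' a b, ← hba, M.mul_comm']
    _ = b := hM.cube b

end Localization

section Transport

def transport (f : A ≃ B) : Multiring B where
  add x y := {z | f.symm z ∈ M.add (f.symm x) (f.symm y)}
  mul x y := f (M.mul (f.symm x) (f.symm y))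
  neg x := f (M.neg (f.symm x))
  zero := f M.zero
  one := f M.one
  add_nonempty x y := by
    obtain ⟨c, hc⟩ := M.add_nonempty (f.symm x) (f.symm y)
    exact ⟨f c, by simpa using hc⟩
  add_comm' x y := by
    simp only [M.add_comm' (f.symm x)]
  add_assoc' x y z := by
    ext w
    simp only [Set.mem_iUnion, Set.mem_ofPred_eq, exists_prop]
    constructor
    · rintro ⟨u, hu, hwu⟩
      obtain ⟨v, hv, hwv⟩ := M.exists_add_assoc hwu hu
      exact ⟨f v, by simpa using hv, by simpa using hwv⟩
    · rintro ⟨u, hu, hwu⟩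
      obtain ⟨v, hv, hwv⟩ := M.exists_add_assoc' hwu hu
      exact ⟨f v, by simpa using hv, by simpa using hwv⟩
  add_zero' x := by
    ext z
    simp [M.add_zero']
  zero_mem_add_neg x := by
    simpa using M.zero_mem_add_neg (f.symm x)
  neg_unique x y h := by
    rw [Set.mem_ofPred_eq, Equiv.symm_apply_apply] at h
    rw [← M.neg_unique _ _ h, Equiv.apply_symm_apply]
  mem_add_reverse x y z h := by
    simpa using M.mem_add_reverse _ _ _ h
  mul_comm' x y := by
    simp only [M.mul_comm' (f.symm x)]
  mul_assoc' x y z := by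
    simp only [Equiv.symm_apply_apply, M.mul_assoc']
  mul_one' x := by
    simp only [Equiv.symm_apply_apply, M.mul_one', Equiv.apply_symm_apply]
  mul_zero' x := by
    simp only [Equiv.symm_apply_apply, M.mul_zero']
  mul_mem_add d x y z h := by
    simpa using M.mul_mem_add _ _ _ _ h

variable (f : A ≃ B)

theorem transport_add_apply (a b : A) :
    (M.transport f).add (f a) (f b) = {h | ∃ c ∈ M.add a b, h = f c} := by
  ext h
  simp only [transport, Equiv.symm_apply_apply, Set.mem_ofPred_eq]
  exact ⟨fun hh => ⟨_, hh, (f.apply_symm_apply h).symm⟩, by rintro ⟨c, hc, rfl⟩; simpa⟩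

theorem transport_mul_apply (a b : A) : (M.transport f).mul (f a) (f b) = f (M.mul a b) := by
  simp [transport]

theorem transport_neg_apply (a : A) : (M.transport f).neg (f a) = f (M.neg a) := by
  simp [transport]

theorem isIso_transport : IsIso M (M.transport f) f := by
  refine ⟨⟨rfl, rfl, fun a => (M.transport_neg_apply f a).symm,
    fun a b => (M.transport_mul_apply f a b).symm, fun a b c hc => by simpa [transport]⟩,
    f.symm, ⟨?_, ?_, fun x => ?_, fun x y => ?_, fun x y z hz => hz⟩,
    f.symm_apply_apply, f.apply_symm_apply⟩ <;>
  simp [transport]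

end Transport

section Qred

theorem evalQred_surjective : Function.Surjective M.evalQred := by
  rintro ⟨_, a, rfl⟩
  exact ⟨a, rfl⟩

theorem evalQred_injective_iff : Function.Injective M.evalQred ↔ Function.Injective M.hat :=
  ⟨fun h _ _ hab => h (Subtype.ext hab), fun h _ _ hab => h (congrArg Subtype.val hab)⟩

theorem isReduced_of_hat_injective (h : Function.Injective M.hat) : M.IsReduced where
  cube a := h <| funext fun σ => by
    change σ.1 (M.mul a (M.mul a a)) = σ.1 a
    rw [σ.2.map_mul, σ.2.map_mul]
    generalize σ.1 a = s
    revert s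
    decide
  add_mul_mul_self a b := (M.add_nonempty _ _).subset_singleton_iff.mp fun c hc =>
    h <| funext fun σ => by
      have hσ := σ.2.map_mem_add hc
      rw [σ.2.map_mul, σ.2.map_mul, Q2add_mul_mul_self] at hσ
      exact hσ
  existsUnique_add_mul_self a b := by
    obtain ⟨c, hc⟩ := M.add_nonempty (M.mul a a) (M.mul b b)
    refine ⟨c, hc, fun c' hc' => h <| funext fun σ => ?_⟩
    have hσ := σ.2.map_mem_add hc
    have hσ' := σ.2.map_mem_add hc'
    rw [σ.2.map_mul, σ.2.map_mul] at hσ hσ'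
    exact Q2add_mul_self_subsingleton _ _ hσ' hσ

end Qred

end Multiring

theorem statement_2_general {A : Type u} (M : Multiring A) :
    (∃ Q : Multiring M.Qredcar,
      (∀ a b : A, Q.add (M.evalQred a) (M.evalQred b) =
        {h : M.Qredcar | ∃ c ∈ M.add a b, h = M.evalQred c}) ∧
      (∀ a b : A, Q.mul (M.evalQred a) (M.evalQred b) = M.evalQred (M.mul a b)) ∧
      (∀ a : A, Q.neg (M.evalQred a) = M.evalQred (M.neg a)) ∧
      Q.zero = M.evalQred M.zero ∧ Q.one = M.evalQred M.one ∧
      Multiring.IsIso M Q M.evalQred) ↔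
    ((∀ a : A, M.mul a (M.mul a a) = a) ∧
     (∀ a b : A, M.add a (M.mul a (M.mul b b)) = {a}) ∧
     (∀ a b : A, ∃! c : A, c ∈ M.add (M.mul a a) (M.mul b b))) := by
  constructor
  · rintro ⟨Q, -, -, -, -, -, -, g, -, hgf, -⟩
    have hinj := M.evalQred_injective_iff.mp (Function.LeftInverse.injective hgf)
    obtain ⟨hcube, habs, huniq⟩ := M.isReduced_of_hat_injective hinj
    exact ⟨hcube, habs, huniq⟩
  · rintro ⟨hcube, habs, huniq⟩
    have hinj := M.evalQred_injective_iff.mpr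
      (Multiring.IsReduced.hat_injective ⟨hcube, habs, huniq⟩)
    let f := Equiv.ofBijective M.evalQred ⟨hinj, M.evalQred_surjective⟩
    exact ⟨M.transport f, M.transport_add_apply f, M.transport_mul_apply f,
      M.transport_neg_apply f, rfl, rfl, M.isIso_transport f⟩

/-- For a multiring `A` with `−1 ∉ ΣA²`, the map `a ↦ ā` from `A` onto
`Q_red(A)` (with its canonical multiring operations) is an isomorphism of multirings
iff (a) `a³ = a`; (b) `a + ab² = {a}`; (c) `a² + b²` contains a unique element. -/
theorem statement_2 {A : Type u} (M : Multiring A)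
    (hsos : ¬ M.SumSq (M.neg M.one)) :
    (∃ Q : Multiring M.Qredcar,
      (∀ a b : A, Q.add (M.evalQred a) (M.evalQred b) =
        {h : M.Qredcar | ∃ c ∈ M.add a b, h = M.evalQred c}) ∧
      (∀ a b : A, Q.mul (M.evalQred a) (M.evalQred b) = M.evalQred (M.mul a b)) ∧
      (∀ a : A, Q.neg (M.evalQred a) = M.evalQred (M.neg a)) ∧
      Q.zero = M.evalQred M.zero ∧ Q.one = M.evalQred M.one ∧
      Multiring.IsIso M Q M.evalQred) ↔
    ((∀ a : A, M.mul a (M.mul a a) = a) ∧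
     (∀ a b : A, M.add a (M.mul a (M.mul b b)) = {a}) ∧
     (∀ a b : A, ∃! c : A, c ∈ M.add (M.mul a a) (M.mul b b))) :=
  statement_2_general M
end

section
/- Let (G, ·, 1, 0, −1, D) be a real semigroup and define a + b := {d ∈ G : d ∈ Dᵗ(a, b)} and −g := (−1)·g. Then (G, +, ·, −, 0, 1) is a real reduced multiring. -/
/-! # Multirings (Marshall) -/

universe u v

/-!
Addition is `a + b = Dᵗ(a,b)`, so the multiring axioms are axioms of the real semigroup in
disguise: associativity is [RS3], the reversibility `c ∈ a + b → a ∈ c − b` is built into the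
three clauses of `Dᵗ`, and `a + 0 = {a}` and uniqueness of negatives are instances of [RS7].

Reducedness rests on one fact: an element of `D(u², v²)` is idempotent ([RS4], [RS6], [RS7]).
Hence every sum of squares is idempotent, which `−1` is not. Moreover `c ∈ u² + v²` absorbs
`u²` and `v²`, so by [RS5] any two elements of `u² + v²` absorb each other and coincide; the
same absorption gives `a + ab² = {a}`.
-/

namespace RealSemigroup

variable {G : Type u} (S : RealSemigroup G)

instance : Std.Associative S.mul := ⟨S.mul_assoc'⟩

instance : Std.Commutative S.mul := ⟨S.mul_comm'⟩

lemma one_mul (a : G) : S.mul S.one a = a := by rw [S.mul_comm', S.mul_one']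

lemma zero_mul (a : G) : S.mul S.zero a = S.zero := by rw [S.mul_comm', S.mul_zero']

lemma mul_self_mul_self (a : G) : S.mul (S.mul a a) a = a := by rw [S.mul_comm', S.cube]

lemma mul_self_mul_mul_self (a x : G) : S.mul (S.mul a a) (S.mul a x) = S.mul a x := by
  rw [← S.mul_assoc', mul_self_mul_self]

lemma mul_self_idem (a : G) : S.mul (S.mul a a) (S.mul a a) = S.mul a a :=
  S.mul_self_mul_mul_self a a

lemma neg_def (a : G) : S.neg a = S.mul S.negOne a := rfl

lemma neg_neg (a : G) : S.neg (S.neg a) = a := by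
  rw [neg_def, neg_def, ← S.mul_assoc', S.negOne_mul_negOne, one_mul]

lemma neg_zero : S.neg S.zero = S.zero := S.mul_zero' _

lemma mul_neg (a b : G) : S.mul a (S.neg b) = S.neg (S.mul a b) := by
  simp only [neg_def]; ac_rfl

lemma D_comm {a b c : G} (h : S.D a b c) : S.D a c b := (S.rs0 b c a).mp h

lemma D_mul_left {a b c : G} (d : G) (h : S.D a b c) :
    S.D (S.mul d a) (S.mul d b) (S.mul d c) := by
  simpa only [S.mul_comm' _ d] using S.rs2 a b c d h

lemma D_neg {a b c : G} (h : S.D a b c) : S.D (S.neg a) (S.neg b) (S.neg c) :=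
  S.D_mul_left S.negOne h

lemma zero_D (a b : G) : S.D S.zero a b := by
  refine S.rs4 a b S.zero S.one S.zero ?_
  simpa only [S.mul_zero', zero_mul, S.mul_one', one_mul] using S.rs1 S.zero b

lemma mul_eq_self_of_D {a c d e : G} (h : S.D c d e) (hd : S.mul a d = d)
    (he : S.mul a e = e) : S.mul a c = c := by
  simpa only [one_mul] using S.rs5 a S.one c d e (by rw [hd, one_mul]) (by rw [he, one_mul]) h

/-- [RS7] with the witness `x = b`, after discarding the clauses that hold by [RS1]. -/
lemma eq_of_D {a b : G} (h₁ : S.D b a (S.neg b)) (h₂ : S.D a b b) (h₃ : S.D a b (S.neg b)) :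
    a = b :=
  S.rs7 a b b ⟨h₁, S.D_neg h₂, by rwa [neg_neg]⟩ ⟨S.rs1 b _, S.rs1 _ _, by rwa [neg_neg]⟩

end RealSemigroup

namespace TernaryStruct.Dt

open RealSemigroup

variable {G : Type u} {S : RealSemigroup G}

lemma symm {x a b : G} (h : S.Dt x a b) : S.Dt x b a :=
  ⟨S.D_comm h.1, S.D_comm h.2.2, S.D_comm h.2.1⟩

lemma neg {x a b : G} (h : S.Dt x a b) : S.Dt (S.neg x) (S.neg a) (S.neg b) :=
  ⟨S.D_neg h.1, by simpa only [neg_neg] using S.D_neg h.2.1,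
    by simpa only [neg_neg] using S.D_neg h.2.2⟩

lemma rev {x a b : G} (h : S.Dt x a b) : S.Dt a x (S.neg b) :=
  ⟨by simpa only [neg_neg] using S.D_neg h.2.1, S.D_neg h.1,
    S.D_comm (by simpa only [neg_neg] using S.D_neg h.2.2)⟩

lemma mul_left {x a b : G} (d : G) (h : S.Dt x a b) :
    S.Dt (S.mul d x) (S.mul d a) (S.mul d b) :=
  ⟨S.D_mul_left d h.1, by simpa only [mul_neg] using S.D_mul_left d h.2.1,
    by simpa only [mul_neg] using S.D_mul_left d h.2.2⟩

end TernaryStruct.Dt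

namespace RealSemigroup

variable {G : Type u} (S : RealSemigroup G)

open TernaryStruct

lemma Dt_zero_right (a : G) : S.Dt a a S.zero :=
  ⟨S.rs1 a S.zero, S.rs1 _ _, by rw [neg_zero]; exact S.zero_D a _⟩

lemma zero_Dt_neg (a : G) : S.Dt S.zero a (S.neg a) :=
  ⟨S.zero_D _ _, by rw [neg_zero]; exact S.D_comm (S.rs1 _ _),
    by rw [neg_neg, neg_zero]; exact S.rs1 a S.zero⟩

lemma eq_of_Dt_zero_right {x a : G} (h : S.Dt x a S.zero) : x = a := by
  have h' : S.Dt a x S.zero := by simpa only [neg_zero] using h.rev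
  exact S.rs7 x a S.zero h.symm.rev h'.symm.rev

lemma eq_neg_of_zero_Dt {a b : G} (h : S.Dt S.zero a b) : b = S.neg a := by
  have h' : S.Dt S.zero (S.neg a) (S.neg b) := by simpa only [neg_zero] using h.neg
  exact S.rs7 b (S.neg a) S.zero (by rw [neg_neg]; exact h.symm) h'

lemma Dt_nonempty (a b : G) : ∃ x, S.Dt x a b := by
  obtain ⟨x, hx, -⟩ := S.rs3 a a S.zero b (S.neg b) (S.Dt_zero_right a) (S.zero_Dt_neg b)
  exact ⟨x, hx⟩

lemma mul_self_eq_of_D_sq {c u v : G} (h : S.D c (S.mul u u) (S.mul v v)) : S.mul c c = c := by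
  have hcc : S.D (S.mul c c) c c := S.rs4 c c u v _ (S.rs2 _ _ _ c h)
  have h₁ : S.Dt c (S.mul c c) (S.neg c) := by
    simpa only [mul_self_idem, mul_self_mul_self] using (S.rs6 c c _ hcc).rev
  have h₂ : S.Dt c c (S.neg (S.mul c c)) := by
    have h := S.rs6 c S.negOne c (S.rs1 c S.negOne)
    rwa [mul_self_mul_self, S.mul_comm' _ S.negOne, ← neg_def] at h
  exact (S.rs7 c (S.mul c c) c h₂ h₁).symm

lemma mul_sq_eq_of_Dt_sq {c u v : G} (h : S.Dt c (S.mul u u) (S.mul v v)) :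
    S.mul c (S.mul u u) = S.mul u u := by
  have hc : S.mul c c = c := S.mul_self_eq_of_D_sq h.1
  set p := S.mul u u
  have hp : S.mul p p = p := S.mul_self_idem u
  refine S.eq_of_D ?_ ?_ ?_
  · have h' : S.D p c (S.neg (S.mul v v)) := by simpa only [neg_neg] using S.D_neg h.2.1
    have e : S.mul (S.mul v v) (S.neg p) = S.mul p (S.neg (S.mul v v)) := by
      simp only [neg_def]; ac_rfl
    refine S.rs4 _ _ S.one v _ ?_
    rw [S.mul_one', one_mul, e, S.mul_comm' c]
    simpa only [hp] using S.D_mul_left p h'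
  · refine S.rs4 _ _ S.one v _ ?_
    rw [S.mul_one', one_mul, S.mul_comm' (S.mul v v), S.mul_comm' c]
    simpa only [hp] using S.D_mul_left p h.1
  · refine S.rs4 _ _ c S.one _ ?_
    rw [hc, S.mul_one', one_mul]
    exact S.rs1 _ _

lemma eq_of_Dt_sq {c d u v : G} (hc : S.Dt c (S.mul u u) (S.mul v v))
    (hd : S.Dt d (S.mul u u) (S.mul v v)) : c = d := by
  have hcd : S.mul c d = d :=
    S.mul_eq_self_of_D hd.1 (S.mul_sq_eq_of_Dt_sq hc) (S.mul_sq_eq_of_Dt_sq hc.symm)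
  have hdc : S.mul d c = c :=
    S.mul_eq_self_of_D hc.1 (S.mul_sq_eq_of_Dt_sq hd) (S.mul_sq_eq_of_Dt_sq hd.symm)
  rw [← hdc, S.mul_comm', hcd]

lemma Dt_self_mul_sq (a b : G) : S.Dt a a (S.mul a (S.mul b b)) := by
  simpa only [mul_self_mul_self, mul_self_mul_mul_self] using
    S.rs6 a (S.mul a (S.mul b b)) a (S.rs1 a _)

lemma eq_of_Dt_self_mul_sq {x a b : G} (h : S.Dt x a (S.mul a (S.mul b b))) : x = a := by
  have hx : S.mul (S.mul a a) x = x :=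
    S.mul_eq_self_of_D h.1 (S.mul_self_mul_self a) (S.mul_self_mul_mul_self a _)
  have hax : S.mul a x = S.mul a a := by
    refine S.eq_of_Dt_sq (u := a) (v := S.mul a b) ?_ ?_
    · have e : S.mul a (S.mul a (S.mul b b)) = S.mul (S.mul a b) (S.mul a b) := by ac_rfl
      simpa only [e] using h.mul_left a
    · have e : S.mul (S.mul a a) (S.mul b b) = S.mul (S.mul a b) (S.mul a b) := by ac_rfl
      simpa only [mul_self_idem, e] using S.Dt_self_mul_sq (S.mul a a) b
  rw [← hx, S.mul_assoc', hax, S.cube]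

def toMultiring : Multiring G where
  add a b := {x | S.Dt x a b}
  mul := S.mul
  neg := S.neg
  zero := S.zero
  one := S.one
  add_nonempty := S.Dt_nonempty
  add_comm' a b := Set.ext fun _ => ⟨Dt.symm, Dt.symm⟩
  add_assoc' a b c := by
    ext w
    simp only [Set.mem_iUnion, Set.mem_ofPred_eq, exists_prop]
    constructor
    · rintro ⟨x, hx, hw⟩
      exact S.rs3 w a x b c hw hx
    · rintro ⟨y, hy, hw⟩
      obtain ⟨x, hx, hw'⟩ := S.rs3 w c y b a hw.symm hy.symm
      exact ⟨x, hx.symm, hw'.symm⟩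
  add_zero' a := Set.ext fun _ =>
    ⟨S.eq_of_Dt_zero_right, by rintro rfl; exact S.Dt_zero_right _⟩
  zero_mem_add_neg := S.zero_Dt_neg
  neg_unique _ _ := S.eq_neg_of_zero_Dt
  mem_add_reverse _ _ _ := Dt.rev
  mul_comm' := S.mul_comm'
  mul_assoc' := S.mul_assoc'
  mul_one' := S.mul_one'
  mul_zero' := S.mul_zero'
  mul_mem_add d _ _ _ := Dt.mul_left d

lemma mul_self_eq_of_sumSq {t : G} (h : S.toMultiring.SumSq t) : S.mul t t = t := by
  induction h with
  | sq a => exact S.mul_self_idem a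
  | step a b c _ hc ih =>
    have hc : S.D c (S.mul a a) (S.mul b b) := by rw [ih]; exact hc.1
    exact S.mul_self_eq_of_D_sq hc

lemma not_sumSq_neg_one : ¬ S.toMultiring.SumSq (S.neg S.one) := fun h =>
  S.negOne_ne_one <| by
    simpa only [neg_def, S.mul_one', S.negOne_mul_negOne] using (S.mul_self_eq_of_sumSq h).symm

lemma isRealReduced_toMultiring : S.toMultiring.IsRealReduced := by
  refine ⟨S.not_sumSq_neg_one, S.cube, fun a b => ?_, fun a b => ?_⟩
  · exact Set.ext fun _ =>
      ⟨S.eq_of_Dt_self_mul_sq, by rintro rfl; exact S.Dt_self_mul_sq _ b⟩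
  · obtain ⟨x, hx⟩ := S.Dt_nonempty (S.mul a a) (S.mul b b)
    exact ⟨x, hx, fun y hy => S.eq_of_Dt_sq hy hx⟩

end RealSemigroup

/-- For a real semigroup `(G, ·, 1, 0, −1, D)`, setting
`a + b := {d ∈ G : d ∈ Dᵗ(a,b)}` and `−g := (−1)·g` yields a real reduced
multiring `(G, +, ·, −, 0, 1)`. -/
theorem statement_7 {G : Type u} (S : RealSemigroup G) :
    ∃ Q : Multiring G,
      (∀ a b : G, Q.add a b = {d : G | S.toTernaryStruct.Dt d a b}) ∧
      Q.mul = S.mul ∧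
      (∀ a : G, Q.neg a = S.mul S.negOne a) ∧
      Q.zero = S.zero ∧ Q.one = S.one ∧
      Q.IsRealReduced :=
  ⟨S.toMultiring, fun _ _ => rfl, rfl, fun _ => rfl, rfl, rfl, S.isRealReduced_toMultiring⟩
end
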